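/- arXiv:1304.4679 — 4 statements merged into one kernel-verified Lean document; each statement's English description precedes it below -/
import Mathlib

section
/- Let g : G → {1,…,n̂} be any partition of the graph into at most n̂ communities, and let f : G → V^{n̂} be its associated partition function. Then the modularity satisfies Q(g) = 1 − γ − (1/(2m))·( |f|_TV − γ ‖f − mean(f)‖_{ℓ2}² ). -/
/-- For any partition `g : G → {1,…,n̂}` with associated partition
function `f : G → V^{n̂}`, the modularity satisfies
`Q(g) = 1 − γ − (1/(2m))·( |f|_TV − γ ‖f − mean(f)‖_{ℓ2}² )`. -/
theorem modularity_eq_tv_balance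
    (N nh : ℕ) (hN : 1 ≤ N)
    (W : Matrix (Fin N) (Fin N) ℝ)
    (hsym : ∀ i j, W i j = W j i)
    (hnonneg : ∀ i j, 0 ≤ W i j)
    (k : Fin N → ℝ) (hk : ∀ i, k i = ∑ j, W i j)
    (m : ℝ) (hm : 2 * m = ∑ i, k i) (hmpos : 0 < m)
    (γ : ℝ) (hγ : 0 < γ)
    (g : Fin N → Fin nh)
    (f : Fin N → Fin nh → ℝ)
    (hf : ∀ i l, f i l = if g i = l then 1 else 0) :
    (1 / (2 * m)) *
        ∑ i, ∑ j, (W i j - γ * (k i * k j) / (2 * m)) * (if g i = g j then 1 else 0)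
      = 1 - γ -
        (1 / (2 * m)) *
          ((∑ l, (1 / 2) * ∑ i, ∑ j, W i j * |f i l - f j l|)
            - γ * ∑ l, ∑ i, k i * (f i l - (1 / (2 * m)) * ∑ j, k j * f j l) ^ 2) := by
  have hm0 : m ≠ 0 := ne_of_gt hmpos
  set S : ℝ := ∑ i, ∑ j, W i j * (if g i = g j then (1:ℝ) else 0) with hS
  set T : ℝ := ∑ i, ∑ j, (k i * k j) * (if g i = g j then (1:ℝ) else 0) with hT
  -- total weight
  have hW2m : ∑ i, ∑ j, W i j = 2 * m := by
    rw [hm]; exact Finset.sum_congr rfl fun i _ => (hk i).symm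
  -- δ via sum of |f - f|
  have habs : ∀ i j : Fin N, ∑ l, |f i l - f j l|
      = 2 - 2 * (if g i = g j then (1:ℝ) else 0) := by
    intro i j
    by_cases h : g i = g j
    · simp [hf, h]
    · have hpt : ∀ l, |f i l - f j l|
          = (if g i = l then (1:ℝ) else 0) + (if g j = l then 1 else 0) := by
        intro l
        rw [hf, hf]
        by_cases h1 : g i = l <;> by_cases h2 : g j = l
        · exact absurd (h1.trans h2.symm) h
        · simp [h1, h2]
        · simp [h1, h2]
        · simp [h1, h2]
      rw [Finset.sum_congr rfl fun l _ => hpt l, Finset.sum_add_distrib,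
        Finset.sum_ite_eq, Finset.sum_ite_eq]
      simp [h]
      norm_num
  -- sum over l of f i l equals 1
  have hrow : ∀ i, ∑ l, f i l = 1 := by
    intro i
    simp [hf, Finset.sum_ite_eq]
  -- sum over l of f i l * f j l equals δ
  have hff : ∀ i j, ∑ l, f i l * f j l = (if g i = g j then (1:ℝ) else 0) := by
    intro i j
    have : ∀ l, f i l * f j l = if g i = l then (if g j = l then (1:ℝ) else 0) else 0 := by
      intro l; rw [hf, hf]; by_cases h1 : g i = l <;> simp [h1]
    rw [Finset.sum_congr rfl fun l _ => this l, Finset.sum_ite_eq]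
    simp [eq_comm]
  -- TV term
  have hTV : (∑ l, (1 / 2 : ℝ) * ∑ i, ∑ j, W i j * |f i l - f j l|) = 2 * m - S := by
    rw [← Finset.mul_sum]
    have hswap : (∑ l, ∑ i, ∑ j, W i j * |f i l - f j l|)
        = ∑ i, ∑ j, W i j * ∑ l, |f i l - f j l| := by
      rw [Finset.sum_comm]
      refine Finset.sum_congr rfl fun i _ => ?_
      rw [Finset.sum_comm]
      refine Finset.sum_congr rfl fun j _ => ?_
      rw [Finset.mul_sum]
    rw [hswap]
    have : (∑ i, ∑ j, W i j * ∑ l, |f i l - f j l|)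
        = ∑ i, ∑ j, (2 * W i j - 2 * (W i j * (if g i = g j then (1:ℝ) else 0))) := by
      refine Finset.sum_congr rfl fun i _ => Finset.sum_congr rfl fun j _ => ?_
      rw [habs i j]; ring
    rw [this]
    simp only [Finset.sum_sub_distrib, ← Finset.mul_sum]
    rw [hW2m, hS]; ring
  -- norm term
  have hNorm : (∑ l, ∑ i, k i * (f i l - (1 / (2 * m)) * ∑ j, k j * f j l) ^ 2)
      = 2 * m - (1 / (2 * m)) * T := by
    have hf2 : ∀ i l, f i l ^ 2 = f i l := by
      intro i l; rw [hf]; by_cases h : g i = l <;> simp [h]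
    have hinner : ∀ l, (∑ i, k i * (f i l - (1 / (2 * m)) * ∑ j, k j * f j l) ^ 2)
        = (∑ j, k j * f j l) - (1 / (2 * m)) * (∑ j, k j * f j l) ^ 2 := by
      intro l
      set v : ℝ := ∑ j, k j * f j l with hv
      have hpt : ∀ i, k i * (f i l - (1 / (2 * m)) * v) ^ 2
          = k i * f i l - (2 * ((1 / (2 * m)) * v)) * (k i * f i l)
            + ((1 / (2 * m)) * v) ^ 2 * k i := by
        intro i
        have : (f i l - (1 / (2 * m)) * v) ^ 2
            = f i l ^ 2 - 2 * ((1 / (2 * m)) * v) * f i l + ((1 / (2 * m)) * v) ^ 2 := by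
          ring
        rw [this, hf2]; ring
      rw [Finset.sum_congr rfl fun i _ => hpt i]
      rw [Finset.sum_add_distrib, Finset.sum_sub_distrib, ← Finset.mul_sum, ← Finset.mul_sum,
        ← hv, ← hm]
      field_simp
      ring
    rw [Finset.sum_congr rfl fun l _ => hinner l, Finset.sum_sub_distrib, ← Finset.mul_sum]
    have h1 : (∑ l, ∑ j, k j * f j l) = 2 * m := by
      rw [Finset.sum_comm]
      have : ∀ j : Fin N, (∑ l, k j * f j l) = k j := by
        intro j; rw [← Finset.mul_sum, hrow, mul_one]
      rw [Finset.sum_congr rfl fun j _ => this j, ← hm]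
    have h2 : (∑ l, (∑ j, k j * f j l) ^ 2) = T := by
      have hx : ∀ l, ((∑ j, k j * f j l) ^ 2 : ℝ)
          = ∑ i, ∑ j, (k i * k j) * (f i l * f j l) := by
        intro l
        rw [sq, Finset.sum_mul_sum]
        exact Finset.sum_congr rfl fun i _ => Finset.sum_congr rfl fun j _ => by ring
      rw [Finset.sum_congr rfl fun l _ => hx l, Finset.sum_comm]
      refine Finset.sum_congr rfl fun i _ => ?_
      rw [Finset.sum_comm]
      refine Finset.sum_congr rfl fun j _ => ?_
      rw [← Finset.mul_sum, hff]
    rw [h1, h2]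
  -- LHS in terms of S and T
  have hLHS : (∑ i, ∑ j, (W i j - γ * (k i * k j) / (2 * m)) * (if g i = g j then (1:ℝ) else 0))
      = S - (γ / (2 * m)) * T := by
    rw [hS, hT, Finset.mul_sum, ← Finset.sum_sub_distrib]
    refine Finset.sum_congr rfl fun i _ => ?_
    rw [Finset.mul_sum, ← Finset.sum_sub_distrib]
    refine Finset.sum_congr rfl fun j _ => ?_
    ring
  rw [hLHS, hTV, hNorm]
  field_simp
  ring
end

section
/- A partition g* : G → {1,…,n̂} maximizes the modularity Q over all partitions g : G → {1,…,n̂} (partitions into at most n̂ communities) if and only if its associated partition function f* minimizes the functional f ↦ |f|_TV − γ ‖f − mean(f)‖_{ℓ2}² over all functions f : G → V^{n̂}. -/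
/-- The modularity `Q(g)` of a partition `g : G → {1,…,n̂}`. -/
noncomputable def modularityQ (N nh : ℕ) (W : Matrix (Fin N) (Fin N) ℝ)
    (k : Fin N → ℝ) (m γ : ℝ) (g : Fin N → Fin nh) : ℝ :=
  (1 / (2 * m)) *
    ∑ i, ∑ j, (W i j - γ * (k i * k j) / (2 * m)) * (if g i = g j then 1 else 0)

/-- The energy `|f|_TV − γ ‖f − mean(f)‖_{ℓ2}²` of `f : G → ℝ^{n̂}`. -/
noncomputable def tvEnergy (N nh : ℕ) (W : Matrix (Fin N) (Fin N) ℝ)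
    (k : Fin N → ℝ) (m γ : ℝ) (f : Fin N → Fin nh → ℝ) : ℝ :=
  (∑ l, (1 / 2) * ∑ i, ∑ j, W i j * |f i l - f j l|)
    - γ * ∑ l, ∑ i, k i * (f i l - (1 / (2 * m)) * ∑ j, k j * f j l) ^ 2

/-- The partition function `f : G → V^{n̂}` associated with `g`, i.e. `f_i = e_{g_i}`. -/
def partitionFn (N nh : ℕ) (g : Fin N → Fin nh) : Fin N → Fin nh → ℝ :=
  fun i l => if g i = l then 1 else 0

/-- `f : G → ℝ^{n̂}` takes values in the standard basis `V^{n̂} = {e_1,…,e_{n̂}}`. -/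
def takesBasisValues (N nh : ℕ) (f : Fin N → Fin nh → ℝ) : Prop :=
  ∀ i, ∃ l : Fin nh, ∀ s, f i s = if s = l then 1 else 0

lemma tvEnergy_partitionFn (N nh : ℕ) (W : Matrix (Fin N) (Fin N) ℝ)
    (k : Fin N → ℝ) (hk : ∀ i, k i = ∑ j, W i j)
    (m γ : ℝ) (hm : 2 * m = ∑ i, k i) (hm0 : m ≠ 0)
    (g : Fin N → Fin nh) :
    tvEnergy N nh W k m γ (partitionFn N nh g)
      = 2 * m * (1 - γ) - 2 * m * modularityQ N nh W k m γ g := by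
  set f := partitionFn N nh g with hf
  set δ : Fin N → Fin N → ℝ := fun i j => if g i = g j then 1 else 0 with hδ
  have habs : ∀ i j l, |f i l - f j l| = f i l + f j l - 2 * (f i l * f j l) := by
    intro i j l
    simp only [hf, partitionFn]
    split_ifs <;> norm_num
  have hsum1 : ∀ i, ∑ l, f i l = 1 := by
    intro i; simp [hf, partitionFn]
  have hsum2 : ∀ i j, ∑ l, f i l * f j l = δ i j := by
    intro i j
    simp only [hf, partitionFn, hδ]
    rw [Finset.sum_congr rfl (fun l _ => show (if g i = l then (1:ℝ) else 0) * (if g j = l then 1 else 0) = if g i = l then (if g i = g j then 1 else 0) else 0 by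
      split_ifs with h1 h2 h3 h4 <;> simp_all)]
    simp
  have hWsum : ∑ i, ∑ j, W i j = 2 * m := by rw [hm]; exact Finset.sum_congr rfl (fun i _ => (hk i).symm)
  -- TV part
  have hTV : (∑ l, (1 / 2 : ℝ) * ∑ i, ∑ j, W i j * |f i l - f j l|)
      = 2 * m - ∑ i, ∑ j, W i j * δ i j := by
    rw [← Finset.mul_sum, Finset.sum_comm]
    have : ∀ i ∈ Finset.univ, (∑ l, ∑ j, W i j * |f i l - f j l|) = ∑ j, W i j * (2 - 2 * δ i j) := by
      intro i _
      rw [Finset.sum_comm]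
      refine Finset.sum_congr rfl (fun j _ => ?_)
      rw [Finset.sum_congr rfl (fun l _ => by rw [habs i j l]), ← Finset.mul_sum]
      rw [Finset.sum_sub_distrib, Finset.sum_add_distrib, hsum1, hsum1, ← Finset.mul_sum, hsum2]
      ring
    rw [Finset.sum_congr rfl this]
    have h2 : ∑ i, ∑ j, W i j * (2 - 2 * δ i j) = 2 * (∑ i, ∑ j, W i j) - 2 * ∑ i, ∑ j, W i j * δ i j := by
      rw [Finset.mul_sum, Finset.mul_sum, ← Finset.sum_sub_distrib]
      refine Finset.sum_congr rfl (fun i _ => ?_)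
      rw [Finset.mul_sum, Finset.mul_sum, ← Finset.sum_sub_distrib]
      exact Finset.sum_congr rfl (fun j _ => by ring)
    rw [h2, hWsum]; ring
  -- L2 part
  have hsq : ∀ i l, f i l ^ 2 = f i l := by
    intro i l; simp only [hf, partitionFn]; split_ifs <;> norm_num
  set S : Fin nh → ℝ := fun l => ∑ j, k j * f j l with hS
  have hL2inner : ∀ l, (∑ i, k i * (f i l - (1 / (2 * m)) * S l) ^ 2)
      = S l - (1 / (2 * m)) * (S l) ^ 2 := by
    intro l
    have expand : ∀ i, k i * (f i l - (1 / (2 * m)) * S l) ^ 2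
        = k i * f i l - 2 * (1 / (2 * m)) * S l * (k i * f i l) + ((1 / (2 * m)) * S l) ^ 2 * k i := by
      intro i
      linear_combination k i * hsq i l
    rw [Finset.sum_congr rfl (fun i _ => expand i)]
    rw [Finset.sum_add_distrib, Finset.sum_sub_distrib, ← Finset.mul_sum, ← Finset.mul_sum, ← hm]
    rw [show (∑ x, k x * f x l) = S l from rfl]
    field_simp
    ring
  have hSsum : ∑ l, S l = 2 * m := by
    rw [hS, Finset.sum_comm]
    rw [Finset.sum_congr rfl (fun j _ => by rw [← Finset.mul_sum, hsum1 j, mul_one])]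
    exact hm.symm
  have hSsq : ∑ l, (S l) ^ 2 = ∑ i, ∑ j, k i * k j * δ i j := by
    have : ∀ l, (S l) ^ 2 = ∑ i, ∑ j, (k i * f i l) * (k j * f j l) := by
      intro l
      rw [sq, hS, Finset.sum_mul_sum]
    rw [Finset.sum_congr rfl (fun l _ => this l), Finset.sum_comm]
    refine Finset.sum_congr rfl (fun i _ => ?_)
    rw [Finset.sum_comm]
    refine Finset.sum_congr rfl (fun j _ => ?_)
    rw [Finset.sum_congr rfl (fun l _ => show (k i * f i l) * (k j * f j l) = (k i * k j) * (f i l * f j l) by ring)]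
    rw [← Finset.mul_sum, hsum2]
  have hL2 : (∑ l, ∑ i, k i * (f i l - (1 / (2 * m)) * ∑ j, k j * f j l) ^ 2)
      = 2 * m - (1 / (2 * m)) * ∑ i, ∑ j, k i * k j * δ i j := by
    rw [Finset.sum_congr rfl (fun l _ => hL2inner l), Finset.sum_sub_distrib, hSsum,
      ← Finset.mul_sum, hSsq]
  -- modularity part
  have hQ : modularityQ N nh W k m γ g
      = (1 / (2 * m)) * ((∑ i, ∑ j, W i j * δ i j) - (γ / (2 * m)) * ∑ i, ∑ j, k i * k j * δ i j) := by
    rw [modularityQ]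
    congr 1
    rw [Finset.mul_sum, ← Finset.sum_sub_distrib]
    refine Finset.sum_congr rfl (fun i _ => ?_)
    rw [Finset.mul_sum, ← Finset.sum_sub_distrib]
    refine Finset.sum_congr rfl (fun j _ => ?_)
    simp only [hδ]
    ring
  rw [tvEnergy, hTV, hL2, hQ]
  field_simp
  ring

/-- `g*` maximizes modularity `Q` over all partitions into at most `n̂`
communities if and only if its associated partition function `f*` minimizes
`f ↦ |f|_TV − γ ‖f − mean(f)‖_{ℓ2}²` over all functions `f : G → V^{n̂}`. -/
theorem modularity_max_iff_tv_min
    (N nh : ℕ) (hN : 1 ≤ N)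
    (W : Matrix (Fin N) (Fin N) ℝ)
    (hsym : ∀ i j, W i j = W j i)
    (hnonneg : ∀ i j, 0 ≤ W i j)
    (k : Fin N → ℝ) (hk : ∀ i, k i = ∑ j, W i j)
    (m : ℝ) (hm : 2 * m = ∑ i, k i) (hmpos : 0 < m)
    (γ : ℝ) (hγ : 0 < γ)
    (gstar : Fin N → Fin nh) :
    (∀ g : Fin N → Fin nh, modularityQ N nh W k m γ g ≤ modularityQ N nh W k m γ gstar)
      ↔
    (∀ f : Fin N → Fin nh → ℝ, takesBasisValues N nh f →
      tvEnergy N nh W k m γ (partitionFn N nh gstar) ≤ tvEnergy N nh W k m γ f) := by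
  have hm0 : m ≠ 0 := ne_of_gt hmpos
  have key := tvEnergy_partitionFn N nh W k hk m γ hm hm0
  constructor
  · intro hQ f hf
    choose G hG using hf
    have hfg : f = partitionFn N nh G := by
      funext i s
      rw [hG i s, partitionFn]
      simp [eq_comm]
    rw [hfg, key, key]
    have := hQ G
    nlinarith
  · intro hE g
    have hb : takesBasisValues N nh (partitionFn N nh g) := by
      intro i
      exact ⟨g i, fun s => by simp [partitionFn, eq_comm]⟩
    have := hE (partitionFn N nh g) hb
    rw [key, key] at this
    nlinarith
end

section
/- Let g : G → {1,…,n̂} be a partition with associated partition function f : G → V^{n̂}, and set A_l = g^{-1}(l). Then |f|_TV − γ ‖f − mean(f)‖_{ℓ2}² = Σ_{l=1}^{n̂} ( Cut(A_l, A_l^c) − γ·vol(A_l)·vol(A_l^c)/(2m) ). -/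
/-- For a partition `g` with associated partition function `f` and
communities `A_l = g⁻¹(l)`,
`|f|_TV − γ ‖f − mean(f)‖_{ℓ2}² = Σ_l ( Cut(A_l, A_l^c) − γ·vol(A_l)·vol(A_l^c)/(2m) )`. -/
theorem tv_energy_eq_cut_balance
    (N nh : ℕ) (hN : 1 ≤ N)
    (W : Matrix (Fin N) (Fin N) ℝ)
    (hsym : ∀ i j, W i j = W j i)
    (hnonneg : ∀ i j, 0 ≤ W i j)
    (k : Fin N → ℝ) (hk : ∀ i, k i = ∑ j, W i j)
    (m : ℝ) (hm : 2 * m = ∑ i, k i) (hmpos : 0 < m)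
    (γ : ℝ) (hγ : 0 < γ)
    (g : Fin N → Fin nh)
    (f : Fin N → Fin nh → ℝ)
    (hf : ∀ i l, f i l = if g i = l then 1 else 0) :
    (∑ l, (1 / 2) * ∑ i, ∑ j, W i j * |f i l - f j l|)
        - γ * ∑ l, ∑ i, k i * (f i l - (1 / (2 * m)) * ∑ j, k j * f j l) ^ 2
      = ∑ l, ((∑ i, ∑ j, if g i = l ∧ g j ≠ l then W i j else 0)
          - γ * (∑ i, if g i = l then k i else 0) * (∑ i, if g i ≠ l then k i else 0)
              / (2 * m)) := by
  have hm0 : m ≠ 0 := ne_of_gt hmpos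
  rw [Finset.mul_sum, ← Finset.sum_sub_distrib]
  apply Finset.sum_congr rfl
  intro l _
  -- TV part
  have hcut : (1 / 2 : ℝ) * ∑ i, ∑ j, W i j * |f i l - f j l|
      = ∑ i, ∑ j, if g i = l ∧ g j ≠ l then W i j else 0 := by
    have habs : ∀ i j : Fin N, W i j * |f i l - f j l|
        = (if g i = l ∧ g j ≠ l then W i j else 0)
          + (if g j = l ∧ g i ≠ l then W i j else 0) := by
      intro i j
      rw [hf, hf]
      by_cases hi : g i = l <;> by_cases hj : g j = l <;> simp [hi, hj]
    have : ∑ i, ∑ j, W i j * |f i l - f j l|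
        = (∑ i, ∑ j, if g i = l ∧ g j ≠ l then W i j else 0)
          + (∑ i, ∑ j, if g j = l ∧ g i ≠ l then W i j else 0) := by
      rw [← Finset.sum_add_distrib]
      apply Finset.sum_congr rfl
      intro i _
      rw [← Finset.sum_add_distrib]
      exact Finset.sum_congr rfl fun j _ => habs i j
    have hswap : (∑ i, ∑ j, if g j = l ∧ g i ≠ l then W i j else 0)
        = ∑ i, ∑ j, if g i = l ∧ g j ≠ l then W i j else 0 := by
      rw [Finset.sum_comm]
      apply Finset.sum_congr rfl
      intro i _
      apply Finset.sum_congr rfl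
      intro j _
      rw [hsym]
    rw [this, hswap]
    ring
  -- energy part
  have hSind : ∑ j, k j * f j l = ∑ i, if g i = l then k i else 0 := by
    apply Finset.sum_congr rfl
    intro i _
    rw [hf]
    by_cases h : g i = l <;> simp [h]
  have hvolc : (∑ i, if g i ≠ l then k i else 0)
      = 2 * m - ∑ i, if g i = l then k i else 0 := by
    rw [hm, ← Finset.sum_sub_distrib]
    apply Finset.sum_congr rfl
    intro i _
    by_cases h : g i = l <;> simp [h]
  set S : ℝ := ∑ i, if g i = l then k i else 0 with hSdef
  have hsq : ∀ i : Fin N, k i * (f i l - (1 / (2 * m)) * ∑ j, k j * f j l) ^ 2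
      = k i * f i l - (1 / m) * S * (k i * f i l) + (1 / (2 * m)) ^ 2 * S ^ 2 * k i := by
    intro i
    rw [hSind]
    rw [hf]
    by_cases h : g i = l <;> simp only [h, if_true, if_false] <;> field_simp <;> ring
  have henergy : ∑ i, k i * (f i l - (1 / (2 * m)) * ∑ j, k j * f j l) ^ 2
      = S - S ^ 2 / (2 * m) := by
    calc ∑ i, k i * (f i l - (1 / (2 * m)) * ∑ j, k j * f j l) ^ 2
        = ∑ i, (k i * f i l - (1 / m) * S * (k i * f i l)
            + (1 / (2 * m)) ^ 2 * S ^ 2 * k i) :=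
          Finset.sum_congr rfl fun i _ => hsq i
      _ = (∑ i, k i * f i l) - (1 / m) * S * (∑ i, k i * f i l)
            + (1 / (2 * m)) ^ 2 * S ^ 2 * (∑ i, k i) := by
          rw [Finset.sum_add_distrib, Finset.sum_sub_distrib, ← Finset.mul_sum,
            ← Finset.mul_sum]
      _ = S - (1 / m) * S * S + (1 / (2 * m)) ^ 2 * S ^ 2 * (2 * m) := by
          rw [hSind, ← hm]
      _ = S - S ^ 2 / (2 * m) := by field_simp; ring
  rw [hcut, henergy, hvolc]
  field_simp
end

section
/- Let ε_n > 0 with ε_n → 0, and let f_n → f in X = {f : G → ℝ^{n̂}} (with the ℓ2 metric). If f ∉ X^p, i.e., f(i) ∉ V^{n̂} for some node i, then (1/ε_n²) Σ_{i=1}^N W_multi(f_n(i)) → +∞ as n → ∞. -/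
/-- If `ε_n > 0`, `ε_n → 0`, `f_n → f` in `X = {f : G → ℝ^{n̂}}`, and
`f ∉ X^p` (i.e. `f(i) ∉ V^{n̂}` for some node `i`), then
`(1/ε_n²) Σ_i W_multi(f_n(i)) → +∞`. -/
theorem multiwell_term_blows_up
    (N nh : ℕ) (hN : 1 ≤ N)
    (ε : ℕ → ℝ) (hεpos : ∀ n, 0 < ε n)
    (hε : Filter.Tendsto ε Filter.atTop (nhds 0))
    (fseq : ℕ → Fin N → Fin nh → ℝ) (f : Fin N → Fin nh → ℝ)
    (hconv : Filter.Tendsto fseq Filter.atTop (nhds f))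
    (i₀ : Fin N) (hi₀ : ¬ ∃ l : Fin nh, ∀ s, f i₀ s = if s = l then 1 else 0) :
    Filter.Tendsto
      (fun n => (1 / (ε n) ^ 2) *
        ∑ i, ∏ l, (∑ s, |fseq n i s - (if s = l then 1 else 0)|) ^ 2)
      Filter.atTop Filter.atTop := by
  set W : (Fin N → Fin nh → ℝ) → ℝ :=
    fun g => ∏ l, (∑ s, |g i₀ s - (if s = l then 1 else 0)|) ^ 2 with hWdef
  have hc : 0 < W f := by
    apply Finset.prod_pos
    intro l _
    have hnn : ∀ s ∈ Finset.univ, (0:ℝ) ≤ |f i₀ s - (if s = l then 1 else 0)| :=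
      fun s _ => abs_nonneg _
    have hsum_nonneg : 0 ≤ ∑ s, |f i₀ s - (if s = l then 1 else 0)| :=
      Finset.sum_nonneg hnn
    rcases hsum_nonneg.lt_or_eq with h | h
    · positivity
    · exfalso
      apply hi₀
      refine ⟨l, fun s => ?_⟩
      have h0 := (Finset.sum_eq_zero_iff_of_nonneg hnn).mp h.symm s (Finset.mem_univ s)
      have := abs_eq_zero.mp h0
      linarith
  have h1 : ∀ s, Filter.Tendsto (fun n => fseq n i₀ s) Filter.atTop (nhds (f i₀ s)) := by
    intro s
    have := (tendsto_pi_nhds.mp hconv) i₀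
    exact (tendsto_pi_nhds.mp this) s
  have hWt : Filter.Tendsto (fun n => W (fseq n)) Filter.atTop (nhds (W f)) := by
    simp only [hWdef]
    apply tendsto_finset_prod
    intro l _
    apply Filter.Tendsto.pow
    apply tendsto_finset_sum
    intro s _
    exact ((h1 s).sub tendsto_const_nhds).abs
  have hε2 : Filter.Tendsto (fun n => (ε n) ^ 2) Filter.atTop (nhdsWithin 0 (Set.Ioi 0)) := by
    rw [tendsto_nhdsWithin_iff]
    constructor
    · simpa using hε.pow 2
    · exact Filter.Eventually.of_forall fun n => pow_pos (hεpos n) 2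
  have hinv : Filter.Tendsto (fun n => ((ε n) ^ 2)⁻¹) Filter.atTop Filter.atTop :=
    hε2.inv_tendsto_nhdsGT_zero
  have hmain : Filter.Tendsto (fun n => ((ε n) ^ 2)⁻¹ * (W f / 2)) Filter.atTop Filter.atTop :=
    hinv.atTop_mul_const (by linarith)
  apply Filter.tendsto_atTop_mono' _ _ hmain
  filter_upwards [hWt.eventually (eventually_gt_nhds (half_lt_self hc))] with n hn
  have hS : W f / 2 ≤ ∑ i, ∏ l, (∑ s, |fseq n i s - (if s = l then 1 else 0)|) ^ 2 := by
    have h2 : W (fseq n) ≤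
        ∑ i, ∏ l, (∑ s, |fseq n i s - (if s = l then 1 else 0)|) ^ 2 := by
      apply Finset.single_le_sum (f := fun i => ∏ l, (∑ s, |fseq n i s - (if s = l then 1 else 0)|) ^ 2)
        (fun i _ => Finset.prod_nonneg fun l _ => sq_nonneg _) (Finset.mem_univ i₀)
    linarith [hn.le]
  rw [one_div]
  exact mul_le_mul_of_nonneg_left hS (inv_nonneg.mpr (sq_nonneg _))
end
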